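/- Combining the previous two lemmas with the Hoskin–Deligne formula: the colength of the divisorial ideal J^D(w) with w = n̂·M is h^D(w) = (1/2)( Σ_{i,i'} m_{ii'} n̂_i n̂_{i'} + Σ_i n̂_i ( Σ_{i'} m_{ii'}(2h_{i'} - ν•_{i'}) - 1 ) ). -/

import Mathlib

open Matrix Finset

/-!
Write `N = -(P·Δ·Pᵗ)` with `Δ = diag h` and `w = n̂·M`. Since `M·N = -1`, `w·N = -n̂`, so the
quadratic term `w·N·wᵗ` is `-n̂·M·n̂ᵗ`. For the canonical term, `α·Δ·1ᵗ = n̂·M·(P·h)`, and because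
the off-diagonal entries of `P` are `0` or `-1` (so `p² = -p` there) while the diagonal ones are
`1`, row `i` of `P·h` equals `2hᵢ + N_{ii} = (2hᵢ - ν•ᵢ) + ∑ⱼ N_{ij}`; hence `P·h = (2h - ν•) + N·1`
and `M·(P·h) = M·(2h - ν•) - 1`.
-/

section

variable {ι R : Type*} [Fintype ι]

theorem dotProduct_mulVec_eq_sum_sum [CommRing R] (M : Matrix ι ι R) (v : ι → R) :
    v ⬝ᵥ (M *ᵥ v) = ∑ i, ∑ j, M i j * v i * v j := by
  simp only [dotProduct, mulVec, mul_sum]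
  exact sum_congr rfl fun i _ => sum_congr rfl fun j _ => by ring

theorem det_eq_one_of_isUpperTriangular [CommRing R] [LinearOrder ι] {P : Matrix ι ι R}
    (hP : P.IsUpperTriangular) (hdiag : ∀ i, P i i = 1) : P.det = 1 := by
  simp [det_of_isUpperTriangular hP, hdiag]

variable [DecidableEq ι]

theorem isUnit_det_neg_mul_diagonal_mul_transpose [Field R] {P : Matrix ι ι R} {h : ι → R}
    (hP : IsUnit P.det) (hh : ∀ i, h i ≠ 0) : IsUnit (-(P * diagonal h * Pᵀ)).det := by
  rw [det_neg, det_mul, det_mul, det_transpose, det_diagonal]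
  exact (isUnit_neg_one.pow _).mul
    ((hP.mul (IsUnit.mk0 _ (prod_ne_zero_iff.2 fun i _ => hh i))).mul hP)

variable [CommRing R]

theorem mulVec_apply_eq_two_mul_sub_diag {P : Matrix ι ι R} (h : ι → R)
    (hdiag : ∀ i, P i i = 1) (hoff : ∀ i k, i ≠ k → P i k = 0 ∨ P i k = -1) (i : ι) :
    (P *ᵥ h) i = 2 * h i - (P * diagonal h * Pᵀ) i i := by
  have hsq : ∀ k, P i k * P i k = if k = i then 1 else -P i k := by
    intro k
    split_ifs with hk
    · simp [hk, hdiag]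
    · rcases hoff i k (Ne.symm hk) with h0 | h1 <;> simp [*]
  have hdiag_entry : (P * diagonal h * Pᵀ) i i = h i - ∑ k ∈ univ.erase i, P i k * h k := by
    simp only [mul_apply, diagonal, of_apply, transpose_apply, mul_ite, mul_zero,
      sum_ite_eq', mem_univ, if_true]
    rw [← add_sum_erase _ _ (mem_univ i)]
    simp only [hdiag, mul_one, one_mul, sub_eq_add_neg, ← sum_neg_distrib]
    congr 1
    refine sum_congr rfl fun k hk => ?_
    rw [mul_right_comm, hsq, if_neg (ne_of_mem_erase hk)]
    ring
  rw [hdiag_entry, mulVec, dotProduct, ← add_sum_erase _ _ (mem_univ i), hdiag]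
  ring

theorem dotProduct_vecMul_vecMul_of_mul_eq_neg_one {M N : Matrix ι ι R} (hMN : M * N = -1)
    (v : ι → R) : (v ᵥ* M ᵥ* N) ⬝ᵥ (v ᵥ* M) = -(v ⬝ᵥ (M *ᵥ v)) := by
  rw [vecMul_vecMul, hMN, vecMul_neg, vecMul_one, neg_dotProduct, dotProduct_comm,
    ← dotProduct_mulVec]

theorem mulVec_eq_add_mulVec_one {P : Matrix ι ι R} {h ν : ι → R}
    (hdiag : ∀ i, P i i = 1) (hoff : ∀ i k, i ≠ k → P i k = 0 ∨ P i k = -1)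
    (hν : ∀ i, ν i = ∑ j ∈ univ.erase i, (-(P * diagonal h * Pᵀ)) i j) :
    P *ᵥ h = (fun i => 2 * h i - ν i) + (-(P * diagonal h * Pᵀ)) *ᵥ 1 := by
  funext i
  rw [mulVec_apply_eq_two_mul_sub_diag h hdiag hoff, Pi.add_apply, mulVec, dotProduct_one,
    ← add_sum_erase _ _ (mem_univ i), ← hν, neg_apply]
  ring

theorem vecMul_diagonal_dotProduct_one (v h : ι → R) :
    (v ᵥ* diagonal h) ⬝ᵥ (fun _ => 1) = v ⬝ᵥ h := by
  simp [dotProduct, vecMul_diagonal]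

end

theorem colength_divisorial_ideal_general (s : ℕ)
    (P : Matrix (Fin s) (Fin s) ℚ) (h : Fin s → ℚ)
    (hdiag : ∀ i, P i i = 1)
    (hlower : ∀ i j : Fin s, j < i → P i j = 0)
    (hupper : ∀ i j : Fin s, i < j → P i j = 0 ∨ P i j = -1)
    (hh : ∀ i, 1 ≤ h i)
    (nh : Fin s → ℚ)
    (N M : Matrix (Fin s) (Fin s) ℚ)
    (hN : N = -(P * Matrix.diagonal h * P.transpose))
    (hM : M = -N⁻¹)
    (ν : Fin s → ℚ)
    (hν : ∀ i, ν i = ∑ j ∈ Finset.univ.erase i, N i j)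
    (w α : Fin s → ℚ)
    (hw : w = Matrix.vecMul nh M)
    (hα : α = Matrix.vecMul w P)
    (hD : ℚ)
    (hHD : hD = -((dotProduct (Matrix.vecMul w N) w) +
      (-(dotProduct (Matrix.vecMul α (Matrix.diagonal h)) (fun _ => 1)))) / 2) :
    hD = (1 / 2) * ((∑ i, ∑ i', M i i' * nh i * nh i') +
      ∑ i, nh i * ((∑ i', M i i' * (2 * h i' - ν i')) - 1)) := by
  have hoff : ∀ i k, i ≠ k → P i k = 0 ∨ P i k = -1 := fun i k hik =>
    hik.lt_or_gt.elim (hupper i k) fun hki => .inl (hlower i k hki)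
  have hP : P.det = 1 := det_eq_one_of_isUpperTriangular (fun i j hij => hlower i j hij) hdiag
  have hNdet : IsUnit N.det := hN ▸ isUnit_det_neg_mul_diagonal_mul_transpose (hP ▸ isUnit_one)
    fun i => (one_pos.trans_le (hh i)).ne'
  have hMN : M * N = -1 := by rw [hM, neg_mul, nonsing_inv_mul N hNdet]
  have hPh : P *ᵥ h = (fun i => 2 * h i - ν i) + N *ᵥ 1 :=
    hN ▸ mulVec_eq_add_mulVec_one hdiag hoff (hN ▸ hν)
  have hquad : (w ᵥ* N) ⬝ᵥ w = -(nh ⬝ᵥ (M *ᵥ nh)) :=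
    hw ▸ dotProduct_vecMul_vecMul_of_mul_eq_neg_one hMN nh
  have hcanon : (α ᵥ* diagonal h) ⬝ᵥ (fun _ => 1) =
      ∑ i, nh i * ((∑ i', M i i' * (2 * h i' - ν i')) - 1) := by
    rw [vecMul_diagonal_dotProduct_one, hα, ← dotProduct_mulVec, hPh, hw, ← dotProduct_mulVec,
      mulVec_add, mulVec_mulVec, hMN, neg_mulVec, one_mulVec, ← sub_eq_add_neg]
    rfl
  rw [hHD, hquad, hcanon, dotProduct_mulVec_eq_sum_sum]
  ring

/-- Combining the formulas for `deg_X(A·A)` and `deg_X(A·K)` with the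
Hoskin–Deligne formula: the colength of the divisorial ideal `J^D(w)`, with
`w = nh·M`, `N = -P·Δ·Pᵗ` the intersection matrix, `M = (m_{ii'}) = -N⁻¹`,
`ν•_i = ∑_{j≠i} n_{ij}`, `α = w·P`, `deg_X(A·A) = w·N·wᵗ`,
`deg_X(A·K) = -α·Δ·1ᵗ` and `h^D = -(deg_X(A·A) + deg_X(A·K))/2`, equals
`h^D(w) = (1/2)( ∑_{i,i'} m_{ii'} nh_i nh_{i'}
  + ∑_i nh_i ( ∑_{i'} m_{ii'}(2h_{i'} - ν•_{i'}) - 1 ) )`. -/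
theorem colength_divisorial_ideal (s : ℕ)
    (P : Matrix (Fin s) (Fin s) ℚ) (h : Fin s → ℚ)
    (hdiag : ∀ i, P i i = 1)
    (hlower : ∀ i j : Fin s, j < i → P i j = 0)
    (hupper : ∀ i j : Fin s, i < j → P i j = 0 ∨ P i j = -1)
    (hh : ∀ i, 1 ≤ h i)
    (nh : Fin s → ℚ) (hnh : ∀ i, 0 ≤ nh i)
    (N M : Matrix (Fin s) (Fin s) ℚ)
    (hN : N = -(P * Matrix.diagonal h * P.transpose))
    (hM : M = -N⁻¹)
    (ν : Fin s → ℚ)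
    (hν : ∀ i, ν i = ∑ j ∈ Finset.univ.erase i, N i j)
    (w α : Fin s → ℚ)
    (hw : w = Matrix.vecMul nh M)
    (hα : α = Matrix.vecMul w P)
    (hD : ℚ)
    (hHD : hD = -((dotProduct (Matrix.vecMul w N) w) +
      (-(dotProduct (Matrix.vecMul α (Matrix.diagonal h)) (fun _ => 1)))) / 2) :
    hD = (1 / 2) * ((∑ i, ∑ i', M i i' * nh i * nh i') +
      ∑ i, nh i * ((∑ i', M i i' * (2 * h i' - ν i')) - 1)) :=
  colength_divisorial_ideal_general s P h hdiag hlower hupper hh nh N M hN hM ν hν w α hw hα hD hHD
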